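/- If λ is a paravector (i.e., λ = λ_0 + λ_1 e_1 + ⋯ + λ_n e_n with real coefficients) and μ ∈ C(V_n) is arbitrary, then |λμ| = |μλ| = |λ| |μ|. -/

import Mathlib

/-!
Writing `λμ = Σ_C (Σ_A ε(A, A ∆ C) λ_A μ_{A ∆ C}) e_C` with signs `ε = ±1` and expanding
`|λμ|²`, the diagonal terms give `Σ_A λ_A² Σ_B μ_B² = |λ|²|μ|²` because `C ↦ A ∆ C` is a
bijection. The cross terms for `A ≠ A'` cancel in pairs under the involution `C ↦ C ∆ A ∆ A'`:
when `A, A'` both have at most one element, the two signs in each pair are opposite, which is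
the relation `e_i e_k = -e_k e_i` (`i ≠ k`), `e_i² = -1` in disguise. The same holds for `μλ`.
-/

open Finset Filter

/-- The concrete model of the real Clifford algebra `C(V_n)`:
coefficient functions on the basis `{e_A : A ⊆ {1,…,n}}`. -/
abbrev Cl (n : ℕ) : Type := Finset (Fin n) → ℝ

/-- The sign in `e_A e_B = sgn A B • e_{A Δ B}`. -/
def sgn {n : ℕ} (A B : Finset (Fin n)) : ℝ :=
  (-1 : ℝ) ^ (A ∩ B).card *
    (-1 : ℝ) ^ (∑ j ∈ B, (A.filter (fun i => j < i)).card)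

/-- The Clifford product on `C(V_n)`, determined by `e_i² = -1` and
anticommuting generators. -/
def cmul {n : ℕ} (x y : Cl n) : Cl n := fun C =>
  ∑ A : Finset (Fin n), ∑ B : Finset (Fin n),
    if symmDiff A B = C then sgn A B * x A * y B else 0

/-- The basis element `e_A`. -/
def eA {n : ℕ} (A : Finset (Fin n)) : Cl n := fun B => if B = A then 1 else 0

/-- The identity `e_∅ = 1`. -/
def oneC {n : ℕ} : Cl n := eA ∅

/-- The Euclidean norm `|λ| = (Σ_A λ_A²)^(1/2)` on coefficients. -/
noncomputable def cnorm {n : ℕ} (x : Cl n) : ℝ := Real.sqrt (∑ A, x A ^ 2)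

/-- A paravector: an element of `span{1, e_1, …, e_n}`. -/
def IsParavector {n : ℕ} (x : Cl n) : Prop :=
  ∀ A : Finset (Fin n), 1 < A.card → x A = 0

/-- Membership in the subalgebra `C(V_{n-1})` of `C(V_n)` (here `C(V_n)` is
modelled as `Cl (n+1)` and the distinguished last generator is `e_n`,
indexed by `Fin.last n`). -/
def inLower {n : ℕ} (x : Cl (n+1)) : Prop :=
  ∀ A : Finset (Fin (n+1)), Fin.last n ∈ A → x A = 0

/-- The distinguished last generator `e_n`. -/
def en {n : ℕ} : Cl (n+1) := eA {Fin.last n}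

/-- Clifford conjugation `ē_A = (-1)^{#A(#A+1)/2} e_A`, extended linearly. -/
def conjC {n : ℕ} (x : Cl n) : Cl n :=
  fun A => (-1 : ℝ) ^ (A.card * (A.card + 1) / 2) * x A

/-- The reflection operator `λ ↦ λ*`: the algebra automorphism fixing
`e_1,…,e_{n-1}` and sending `e_n ↦ -e_n`; on coefficients it negates the
components of basis elements containing `e_n`. -/
def starC {n : ℕ} (x : Cl (n+1)) : Cl (n+1) :=
  fun A => if Fin.last n ∈ A then -x A else x A

/-- The real part `Re(λ)`: the `C(V_{n-1})`-component in `λ = Re(λ) + e_n Im^l(λ)`. -/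
def ReC {n : ℕ} (x : Cl (n+1)) : Cl (n+1) :=
  fun A => if Fin.last n ∈ A then 0 else x A

/-- The paravector `W = Σ_{i=0}^{n} w_i e_i` associated to `w ∈ ℝ^{n+1}`
(here with `n+1` generators, so `w ∈ ℝ^{n+2}`). -/
noncomputable def pv {n : ℕ} (w : Fin (n+2) → ℝ) : Cl (n+1) :=
  w 0 • eA (∅ : Finset (Fin (n+1))) + ∑ i : Fin (n+1), w i.succ • eA {i}

/-- The Clifford units `e_0 = 1, e_1, …, e_{n+1}`. -/
def unit {n : ℕ} (k : Fin (n+2)) : Cl (n+1) :=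
  Fin.cases (eA ∅) (fun i => eA {i}) k

/-- Partial derivative `∂f/∂w_k` of a Clifford-valued function. -/
noncomputable def pderiv {n : ℕ} (f : (Fin (n+2) → ℝ) → Cl (n+1))
    (k : Fin (n+2)) (w : Fin (n+2) → ℝ) : Cl (n+1) :=
  fderiv ℝ f w (Pi.single k 1)

/-- The left Dirac operator `D[f] = Σ_k e_k ∂f/∂w_k`. -/
noncomputable def DiracL {n : ℕ} (f : (Fin (n+2) → ℝ) → Cl (n+1))
    (w : Fin (n+2) → ℝ) : Cl (n+1) :=
  ∑ k : Fin (n+2), cmul (unit k) (pderiv f k w)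

/-- The right Dirac operator `[f]D = Σ_k (∂f/∂w_k) e_k`. -/
noncomputable def DiracR {n : ℕ} (f : (Fin (n+2) → ℝ) → Cl (n+1))
    (w : Fin (n+2) → ℝ) : Cl (n+1) :=
  ∑ k : Fin (n+2), cmul (pderiv f k w) (unit k)

/-- `∂[f]/∂x = Σ_{j<last} e_j ∂f/∂w_j` (left action). -/
noncomputable def Dx {n : ℕ} (f : (Fin (n+2) → ℝ) → Cl (n+1))
    (w : Fin (n+2) → ℝ) : Cl (n+1) :=
  ∑ k : Fin (n+2), if k = Fin.last (n+1) then 0 else cmul (unit k) (pderiv f k w)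

/-- `∂f/∂y`: the derivative in the last coordinate. -/
noncomputable def Dy {n : ℕ} (f : (Fin (n+2) → ℝ) → Cl (n+1))
    (w : Fin (n+2) → ℝ) : Cl (n+1) :=
  pderiv f (Fin.last (n+1)) w

/-- The upper half-space `ℝ^{n+1}_+`. -/
def upper (n : ℕ) : Set (Fin (n+2) → ℝ) := {w | 0 < w (Fin.last (n+1))}

/-- The lower half-space `ℝ^{n+1}_-`. -/
def lower (n : ℕ) : Set (Fin (n+2) → ℝ) := {w | w (Fin.last (n+1)) < 0}

/-- The boundary hyperplane `ℝ^{n+1}_0`. -/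
def hyper (n : ℕ) : Set (Fin (n+2) → ℝ) := {w | w (Fin.last (n+1)) = 0}

/-- The point reflection `w ↦ w*` flipping the sign of the last coordinate. -/
def reflPt {n : ℕ} (w : Fin (n+2) → ℝ) : Fin (n+2) → ℝ :=
  Function.update w (Fin.last (n+1)) (-(w (Fin.last (n+1))))

/-- The Euclidean norm on `ℝ^{n+2}`. -/
noncomputable def enorm {n : ℕ} (w : Fin (n+2) → ℝ) : ℝ :=
  Real.sqrt (∑ i, w i ^ 2)

/-- The Cauchy kernel `E(w) = w̄ / |w|^{n+1}` (with `n+1` generators). -/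
noncomputable def Ek {n : ℕ} (w : Fin (n+2) → ℝ) : Cl (n+1) :=
  (_root_.enorm w ^ (n+2))⁻¹ • conjC (pv w)

open scoped symmDiff

section TwistedConvolution

variable {α : Type*} [DecidableEq α]

lemma symmDiff_symmDiff_involutive (A A' : Finset α) :
    Function.Involutive (fun B : Finset α => B ∆ A ∆ A') := fun B => by
  dsimp only
  rw [symmDiff_right_comm _ A' A, symmDiff_symmDiff_cancel_right, symmDiff_symmDiff_cancel_right]

variable [Fintype α]

def twistedConv (s : Finset α → Finset α → ℝ) (x y : Finset α → ℝ) (C : Finset α) : ℝ :=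
  ∑ A, s A (A ∆ C) * x A * y (A ∆ C)

lemma sum_twisted_mul_twisted_eq_zero (s : Finset α → Finset α → ℝ) (x y : Finset α → ℝ)
    (A A' : Finset α) (hcross : ∀ B, s A B * s A' (B ∆ A ∆ A') + s A (B ∆ A ∆ A') * s A' B = 0) :
    ∑ C, (s A (A ∆ C) * x A * y (A ∆ C)) * (s A' (A' ∆ C) * x A' * y (A' ∆ C)) = 0 := by
  set F : Finset α → ℝ := fun B =>
    s A B * s A' (B ∆ A ∆ A') * (x A * x A' * y B * y (B ∆ A ∆ A')) with hF
  have hinv := symmDiff_symmDiff_involutive A A'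
  have hreindex : ∑ C, (s A (A ∆ C) * x A * y (A ∆ C)) * (s A' (A' ∆ C) * x A' * y (A' ∆ C))
      = ∑ B, F B := by
    refine Fintype.sum_bijective (A ∆ ·) (symmDiff_right_involutive A).bijective _ _ fun C => ?_
    have hC : A ∆ C ∆ A ∆ A' = A' ∆ C := by
      rw [symmDiff_right_comm _ C A]
      simp [symmDiff_comm]
    simp only [hF, hC]
    ring
  have hanti : ∀ B, F B + F (B ∆ A ∆ A') = 0 := fun B => by
    simp only [hF, hinv B]
    linear_combination (x A * x A' * y B * y (B ∆ A ∆ A')) * hcross B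
  have hswap : ∑ B, F (B ∆ A ∆ A') = ∑ B, F B := Equiv.sum_comp hinv.toPerm F
  have htwice : ∑ B, F B + ∑ B, F B = 0 := by
    conv_lhs => enter [2]; rw [← hswap]
    rw [← Finset.sum_add_distrib]
    exact Finset.sum_eq_zero fun B _ => hanti B
  rw [hreindex]
  linarith

lemma sum_twisted_mul_self (s : Finset α → Finset α → ℝ) (x y : Finset α → ℝ)
    (hs : ∀ A B, s A B ^ 2 = 1) (A : Finset α) :
    ∑ C, (s A (A ∆ C) * x A * y (A ∆ C)) * (s A (A ∆ C) * x A * y (A ∆ C))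
      = x A ^ 2 * ∑ B, y B ^ 2 := by
  rw [Finset.mul_sum]
  refine Fintype.sum_bijective (A ∆ ·) (symmDiff_right_involutive A).bijective _ _ fun C => ?_
  linear_combination (x A * y (A ∆ C)) ^ 2 * hs A (A ∆ C)

theorem sum_sq_twistedConv (s : Finset α → Finset α → ℝ) (x y : Finset α → ℝ)
    (P : Finset α → Prop) (hs : ∀ A B, s A B ^ 2 = 1) (hx : ∀ A, ¬ P A → x A = 0)
    (hcross : ∀ A A', P A → P A' → A ≠ A' → ∀ B,
      s A B * s A' (B ∆ A ∆ A') + s A (B ∆ A ∆ A') * s A' B = 0) :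
    ∑ C, twistedConv s x y C ^ 2 = (∑ A, x A ^ 2) * ∑ B, y B ^ 2 := by
  set t : Finset α → Finset α → ℝ := fun A C => s A (A ∆ C) * x A * y (A ∆ C) with ht
  have hoff : ∀ A A', A' ≠ A → ∑ C, t A C * t A' C = 0 := by
    intro A A' hne
    by_cases hA : P A
    · by_cases hA' : P A'
      · exact sum_twisted_mul_twisted_eq_zero s x y A A' (hcross A A' hA hA' hne.symm)
      · simp [ht, hx A' hA']
    · simp [ht, hx A hA]
  calc ∑ C, twistedConv s x y C ^ 2 = ∑ C, ∑ A, ∑ A', t A C * t A' C := by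
        simp only [twistedConv, sq, Finset.sum_mul_sum, ht]
    _ = ∑ A, ∑ A', ∑ C, t A C * t A' C := by
        rw [Finset.sum_comm]
        exact Finset.sum_congr rfl fun _ _ => Finset.sum_comm
    _ = ∑ A, x A ^ 2 * ∑ B, y B ^ 2 := Finset.sum_congr rfl fun A _ => by
        rw [Finset.sum_eq_single A (fun A' _ => hoff A A') (by simp)]
        exact sum_twisted_mul_self s x y hs A
    _ = (∑ A, x A ^ 2) * ∑ B, y B ^ 2 := (Finset.sum_mul _ _ _).symm

end TwistedConvolution

section Sign

variable {α : Type*} [DecidableEq α]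

lemma symmDiff_singleton_of_mem {B : Finset α} {k : α} (hk : k ∈ B) : B ∆ {k} = B.erase k := by
  ext j; by_cases hj : j = k <;> simp [Finset.mem_symmDiff, hj, hk]

lemma symmDiff_singleton_of_notMem {B : Finset α} {k : α} (hk : k ∉ B) :
    B ∆ {k} = insert k B := by
  ext j; by_cases hj : j = k <;> simp [Finset.mem_symmDiff, hj, hk]

lemma neg_one_pow_card_filter_symmDiff_singleton (B : Finset α) (k : α) (p : α → Prop)
    [DecidablePred p] :
    (-1 : ℝ) ^ #((B ∆ {k}).filter p) = (if p k then -1 else 1) * (-1) ^ #(B.filter p) := by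
  by_cases hk : k ∈ B
  · rw [symmDiff_singleton_of_mem hk, Finset.filter_erase]
    by_cases hp : p k
    · rw [if_pos hp, ← Finset.card_erase_add_one (Finset.mem_filter.2 ⟨hk, hp⟩), pow_succ]
      ring
    · rw [if_neg hp, Finset.erase_eq_of_notMem fun h => hp (Finset.mem_filter.1 h).2, one_mul]
  · rw [symmDiff_singleton_of_notMem hk, Finset.filter_insert]
    by_cases hp : p k
    · rw [if_pos hp, if_pos hp,
        Finset.card_insert_of_notMem fun h => hk (Finset.mem_filter.1 h).1, pow_succ]
      ring
    · rw [if_neg hp, if_neg hp, one_mul]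

lemma card_filter_or_eq (B : Finset α) (p : α → Prop) [DecidablePred p] {i : α} (hi : ¬ p i) :
    #(B.filter (fun j => p j ∨ j = i)) = #(B.filter p) + if i ∈ B then 1 else 0 := by
  rw [Finset.filter_or, Finset.card_union_of_disjoint
    (Finset.disjoint_filter.2 fun j _ hp (hj : j = i) => hi (hj ▸ hp)), Finset.filter_eq']
  split_ifs <;> simp

lemma cross_eq_zero_of_toggle (s : Finset α → Finset α → ℝ) (χ : α → α → ℝ)
    (hempty : ∀ B, s ∅ B = 1) (htoggle : ∀ i k B, s {i} (B ∆ {k}) = χ i k * s {i} B)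
    (hself : ∀ i, χ i i = -1) (hanti : ∀ i k, i ≠ k → χ i k + χ k i = 0)
    {A A' : Finset α} (hA : #A ≤ 1) (hA' : #A' ≤ 1) (hne : A ≠ A') (B : Finset α) :
    s A B * s A' (B ∆ A ∆ A') + s A (B ∆ A ∆ A') * s A' B = 0 := by
  have hcases : ∀ A : Finset α, #A ≤ 1 → A = ∅ ∨ ∃ i, A = {i} := fun A hA =>
    (Nat.le_one_iff_eq_zero_or_eq_one.1 hA).imp Finset.card_eq_zero.1 Finset.card_eq_one.1
  have hsymmDiff_empty : ∀ B : Finset α, B ∆ ∅ = B := fun B => symmDiff_bot B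
  obtain rfl | ⟨i, rfl⟩ := hcases A hA <;> obtain rfl | ⟨k, rfl⟩ := hcases A' hA'
  · exact absurd rfl hne
  · simp only [hempty, hsymmDiff_empty, htoggle, hself]
    ring
  · simp only [hempty, hsymmDiff_empty, htoggle, hself]
    ring
  · have hik : i ≠ k := fun h => hne (h ▸ rfl)
    simp only [htoggle, hself]
    linear_combination (-(s {i} B * s {k} B)) * hanti i k hik

end Sign

section CliffordSign

variable {n : ℕ}

lemma sgn_sq (A B : Finset (Fin n)) : sgn A B ^ 2 = 1 := by
  simp [sgn, mul_pow, ← pow_mul]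

lemma sgn_empty_left (B : Finset (Fin n)) : sgn ∅ B = 1 := by simp [sgn]

lemma sgn_empty_right (B : Finset (Fin n)) : sgn B ∅ = 1 := by simp [sgn]

lemma sgn_singleton_left (i : Fin n) (B : Finset (Fin n)) :
    sgn {i} B = (-1) ^ #(B.filter (· ≤ i)) := by
  have hsum : ∑ j ∈ B, #(({i} : Finset (Fin n)).filter (j < ·)) = #(B.filter (· < i)) := by
    rw [Finset.card_filter]
    refine Finset.sum_congr rfl fun j _ => ?_
    rw [Finset.filter_singleton]
    split_ifs <;> rfl
  rw [sgn, hsum, Finset.singleton_inter, ← pow_add,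
    Finset.filter_congr fun j _ => le_iff_lt_or_eq, card_filter_or_eq B (· < i) (lt_irrefl i)]
  split_ifs <;> simp [add_comm]

lemma sgn_singleton_right (i : Fin n) (B : Finset (Fin n)) :
    sgn B {i} = (-1) ^ #(B.filter (i ≤ ·)) := by
  rw [sgn, Finset.sum_singleton, Finset.inter_singleton, ← pow_add,
    Finset.filter_congr fun j _ => le_iff_lt_or_eq.trans (or_congr_right eq_comm),
    card_filter_or_eq B (i < ·) (lt_irrefl i)]
  split_ifs <;> simp [add_comm]

lemma sgn_singleton_symmDiff_singleton (i k : Fin n) (B : Finset (Fin n)) :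
    sgn {i} (B ∆ {k}) = (if k ≤ i then -1 else 1) * sgn {i} B := by
  rw [sgn_singleton_left, sgn_singleton_left, neg_one_pow_card_filter_symmDiff_singleton]

lemma sgn_symmDiff_singleton_singleton (i k : Fin n) (B : Finset (Fin n)) :
    sgn (B ∆ {k}) {i} = (if i ≤ k then -1 else 1) * sgn B {i} := by
  rw [sgn_singleton_right, sgn_singleton_right, neg_one_pow_card_filter_symmDiff_singleton]

lemma ite_le_add_ite_le_eq_zero {i k : Fin n} (hik : i ≠ k) :
    ((if k ≤ i then -1 else 1) + if i ≤ k then -1 else 1 : ℝ) = 0 := by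
  rcases hik.lt_or_gt with h | h <;> simp [h.le, h.not_ge]

lemma sgn_cross_left {A A' : Finset (Fin n)} (hA : #A ≤ 1) (hA' : #A' ≤ 1) (hne : A ≠ A')
    (B : Finset (Fin n)) :
    sgn A B * sgn A' (B ∆ A ∆ A') + sgn A (B ∆ A ∆ A') * sgn A' B = 0 :=
  cross_eq_zero_of_toggle sgn (fun i k => if k ≤ i then -1 else 1) sgn_empty_left
    sgn_singleton_symmDiff_singleton (fun _ => if_pos le_rfl)
    (fun _ _ => ite_le_add_ite_le_eq_zero) hA hA' hne B

lemma sgn_cross_right {A A' : Finset (Fin n)} (hA : #A ≤ 1) (hA' : #A' ≤ 1) (hne : A ≠ A')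
    (B : Finset (Fin n)) :
    sgn B A * sgn (B ∆ A ∆ A') A' + sgn (B ∆ A ∆ A') A * sgn B A' = 0 :=
  cross_eq_zero_of_toggle (fun A B => sgn B A) (fun i k => if i ≤ k then -1 else 1)
    sgn_empty_right (fun i k B => sgn_symmDiff_singleton_singleton i k B)
    (fun _ => if_pos le_rfl)
    (fun _ _ hik => (add_comm _ _).trans (ite_le_add_ite_le_eq_zero hik)) hA hA' hne B

end CliffordSign

section CliffordNorm

variable {n : ℕ}

lemma cmul_eq_twistedConv (x y : Cl n) : cmul x y = twistedConv sgn x y := by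
  funext C
  refine Finset.sum_congr rfl fun A _ => ?_
  rw [Finset.sum_eq_single (A ∆ C) (fun B _ hB => if_neg fun h => hB (by
      rw [← h, symmDiff_symmDiff_cancel_left])) (by simp),
    if_pos (symmDiff_symmDiff_cancel_left A C)]

lemma cmul_eq_twistedConv_swap (x y : Cl n) : cmul y x = twistedConv (fun A B => sgn B A) x y := by
  funext C
  rw [cmul, Finset.sum_comm]
  refine Finset.sum_congr rfl fun A _ => ?_
  rw [Finset.sum_eq_single (A ∆ C) (fun B _ hB => if_neg fun h => hB (by
      rw [← h, symmDiff_comm B A, symmDiff_symmDiff_cancel_left])) (by simp),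
    if_pos (by rw [symmDiff_comm, symmDiff_symmDiff_cancel_left])]
  ring

lemma cnorm_twistedConv (s : Finset (Fin n) → Finset (Fin n) → ℝ) (x y : Cl n)
    (hs : ∀ A B, s A B ^ 2 = 1) (hx : IsParavector x)
    (hcross : ∀ A A' : Finset (Fin n), #A ≤ 1 → #A' ≤ 1 → A ≠ A' → ∀ B,
      s A B * s A' (B ∆ A ∆ A') + s A (B ∆ A ∆ A') * s A' B = 0) :
    cnorm (twistedConv s x y) = cnorm x * cnorm y := by
  rw [cnorm, sum_sq_twistedConv s x y _ hs (fun A hA => hx A (not_le.1 hA)) hcross,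
    Real.sqrt_mul (Finset.sum_nonneg fun A _ => sq_nonneg (x A))]
  rfl

end CliffordNorm

/-- for a paravector `λ` and arbitrary `μ`, `|λμ| = |μλ| = |λ||μ|`. -/
theorem stmt_1 (n : ℕ) (x y : Cl n) (hx : IsParavector x) :
    cnorm (cmul x y) = cnorm x * cnorm y ∧ cnorm (cmul y x) = cnorm x * cnorm y :=
  ⟨cmul_eq_twistedConv x y ▸ cnorm_twistedConv sgn x y sgn_sq hx
      fun _ _ hA hA' hne => sgn_cross_left hA hA' hne,
    cmul_eq_twistedConv_swap x y ▸ cnorm_twistedConv _ x y (fun A B => sgn_sq B A) hx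
      fun _ _ hA hA' hne => sgn_cross_right hA hA' hne⟩
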